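/- For every natural number k ≥ 1 there exist real numbers b_1, …, b_{k+1} such that F_k = ∑_{j=1}^{k+1} b_j L_j, where b_j = 0 whenever j and k+1 have different parity, and b_{k+1} = ∏_{j=1}^{k} 1/(2j+1) = 2^k k!/(2k+1)!. -/

import Mathlib

/-- The degree-`j` Legendre polynomial, given by the Rodrigues formula
`L_j(x) = (1/(2^j j!)) (d/dx)^j (x² − 1)^j`. -/
noncomputable def legendre (j : ℕ) : Polynomial ℝ :=
  Polynomial.C ((1 : ℝ) / (2 ^ j * j.factorial)) *
    Polynomial.derivative^[j] ((Polynomial.X ^ 2 - 1) ^ j)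

open Polynomial
lemma second_deriv_pow (i : ℕ) :
    derivative (derivative (((X:Polynomial ℝ)^2 - 1) ^ (i+2))) =
      ((2*(i+2)*(2*i+3) : ℕ) : Polynomial ℝ) * ((X:Polynomial ℝ)^2-1)^(i+1)
      + ((4*(i+1)*(i+2) : ℕ) : Polynomial ℝ) * ((X:Polynomial ℝ)^2-1)^i := by
  simp only [derivative_pow, derivative_sub, derivative_one, derivative_X_pow, derivative_mul,
    derivative_X, derivative_C, C_eq_natCast, derivative_natCast, derivative_zero, Nat.add_sub_cancel]
  push_cast
  ring

lemma iterD_add (k : ℕ) (p q : Polynomial ℝ) :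
    derivative^[k] (p + q) = derivative^[k] p + derivative^[k] q := by
  induction k generalizing p q with
  | zero => simp
  | succ n ih => simp [Function.iterate_succ_apply, derivative_add, ih]

lemma DL (i : ℕ) :
    derivative (legendre (i+2)) = ((2*(i+1)+1 : ℝ)) • legendre (i+1) + derivative (legendre i) := by
  unfold legendre
  rw [derivative_C_mul, derivative_C_mul,
    ← Function.iterate_succ_apply' derivative (i+2),
    ← Function.iterate_succ_apply' derivative i]
  have h3 : derivative^[i+2+1] (((X:Polynomial ℝ)^2-1)^(i+2))
      = derivative^[i+1] (derivative (derivative (((X:Polynomial ℝ)^2-1)^(i+2)))) := by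
    rw [show i+2+1 = (i+1)+2 by omega, Function.iterate_add_apply]
    rfl
  rw [h3, second_deriv_pow, iterD_add, iterate_derivative_natCast_mul,
    iterate_derivative_natCast_mul]
  rw [smul_eq_C_mul, ← C_eq_natCast, ← C_eq_natCast]
  have e1 : (1:ℝ)/(2^(i+2)*(i+2).factorial) * ((2*(i+2)*(2*i+3) : ℕ):ℝ)
      = (2*(i+1)+1 : ℝ) * ((1:ℝ)/(2^(i+1)*(i+1).factorial)) := by
    have h1 : ((i+2).factorial : ℝ) = (i+2) * (i+1).factorial := by
      rw [Nat.factorial_succ]; push_cast; ring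
    have h2 : ((i+1).factorial : ℝ) ≠ 0 := Nat.cast_ne_zero.2 (Nat.factorial_ne_zero _)
    have h4 : (2:ℝ)^(i+1) ≠ 0 := by positivity
    rw [h1]; field_simp
    push_cast
    ring
  have e2 : (1:ℝ)/(2^(i+2)*(i+2).factorial) * ((4*(i+1)*(i+2) : ℕ):ℝ)
      = (1:ℝ)/(2^i * i.factorial) := by
    have h1 : ((i+2).factorial : ℝ) = (i+2) * ((i+1) * i.factorial) := by
      rw [Nat.factorial_succ, Nat.factorial_succ]; push_cast; ring
    have h2 : (i.factorial : ℝ) ≠ 0 := Nat.cast_ne_zero.2 (Nat.factorial_ne_zero _)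
    have h4 : (2:ℝ)^i ≠ 0 := by positivity
    rw [h1]; field_simp
    push_cast
    ring
  rw [mul_add, ← mul_assoc, ← mul_assoc, ← C_mul, ← C_mul, e1, e2]
  rw [C_mul, mul_assoc]

lemma legendre_one : legendre 1 = X := by
  unfold legendre
  simp [derivative_sub, derivative_one, derivative_X_pow]
  rw [one_add_one_eq_two, ← map_ofNat C 2, ← mul_assoc, ← C_mul]
  norm_num

lemma dLzero : derivative (legendre 0) = 0 := by
  unfold legendre; simp

lemma dvdlem (j : ℕ) : ∀ i ≤ j, ∃ R : Polynomial ℝ,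
    derivative^[i] (((X:Polynomial ℝ)^2-1)^j) = ((X:Polynomial ℝ)^2-1)^(j-i) * R := by
  intro i
  induction i with
  | zero => intro _; exact ⟨1, by simp⟩
  | succ n ih =>
    intro hn
    obtain ⟨R, hR⟩ := ih (by omega)
    refine ⟨C ((j - n : ℕ):ℝ) * (C 2 * X) * R + ((X:Polynomial ℝ)^2-1) * derivative R, ?_⟩
    rw [Function.iterate_succ_apply', hR, derivative_mul, derivative_pow]
    have hs : j - n = (j - (n+1)) + 1 := by omega
    rw [hs]
    simp only [Nat.add_sub_cancel, derivative_sub, derivative_one, derivative_X_pow, map_ofNat]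
    push_cast
    simp only [map_ofNat, Nat.cast_ofNat]
    ring

lemma eval_iter_zero (j : ℕ) (hj : 1 ≤ j) (x : ℝ) (hx : x^2 = 1) :
    eval x (derivative^[j-1] (((X:Polynomial ℝ)^2-1)^j)) = 0 := by
  obtain ⟨R, hR⟩ := dvdlem j (j-1) (by omega)
  rw [hR]
  have : j - (j-1) = 1 := by omega
  rw [this]
  simp [hx]

lemma intL (j : ℕ) (hj : 1 ≤ j) : ∫ x in (-1:ℝ)..1, (legendre j).eval x = 0 := by
  set Q : Polynomial ℝ := C ((1 : ℝ) / (2 ^ j * j.factorial)) *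
    derivative^[j-1] ((X ^ 2 - 1) ^ j) with hQ
  have hL : legendre j = derivative Q := by
    rw [hQ, derivative_C_mul,
      ← Function.iterate_succ_apply' derivative (j-1) ((((X:Polynomial ℝ))^2-1)^j)]
    unfold legendre
    rw [show (j-1).succ = j by omega]
  have h1 : ∫ x in (-1:ℝ)..1, (legendre j).eval x = Q.eval 1 - Q.eval (-1) := by
    rw [hL]
    rw [← intervalIntegral.integral_deriv_eq_sub (f := fun x => Q.eval x)]
    · congr 1; ext x; rw [Polynomial.deriv]
    · intro x _; exact (Q.differentiable).differentiableAt
    · rw [show deriv (fun x => Q.eval x) = fun x => (derivative Q).eval x from funext fun x => Polynomial.deriv Q]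
      exact ((derivative Q).continuous).intervalIntegrable _ _
  rw [h1, hQ]
  simp only [eval_mul, eval_C]
  rw [eval_iter_zero j hj 1 (by norm_num), eval_iter_zero j hj (-1) (by norm_num)]
  ring

lemma uniqpoly (p q : Polynomial ℝ) (hd : derivative p = derivative q)
    (hi : (∫ x in (-1:ℝ)..1, p.eval x) = ∫ x in (-1:ℝ)..1, q.eval x) : p = q := by
  have h0 : derivative (p - q) = 0 := by rw [derivative_sub, hd, sub_self]
  have hc := Polynomial.eq_C_of_derivative_eq_zero h0
  have hint : (∫ x in (-1:ℝ)..1, (p - q).eval x) = 0 := by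
    have : ∀ x : ℝ, (p-q).eval x = p.eval x - q.eval x := by intro x; simp
    rw [intervalIntegral.integral_congr (g := fun x => p.eval x - q.eval x) (fun x _ => this x)]
    rw [intervalIntegral.integral_sub ((p.continuous).intervalIntegrable _ _)
      ((q.continuous).intervalIntegrable _ _), hi, sub_self]
  rw [hc] at hint
  simp at hint
  have hcoeff : (p-q).coeff 0 = 0 := by
    simp only [Polynomial.coeff_sub]
    linarith
  have hpq : p - q = 0 := by rw [hc, hcoeff, map_zero]
  exact sub_eq_zero.mp hpq

lemma prodfact (k : ℕ) : (∏ j ∈ Finset.Icc 1 k, (1:ℝ)/(2*j+1))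
    = 2 ^ k * (k.factorial : ℝ) / (2 * k + 1).factorial := by
  induction k with
  | zero => simp
  | succ k ih =>
    rw [Finset.prod_Icc_succ_top (by omega : 1 ≤ k+1), ih]
    have key : ((2*(k+1)+1).factorial : ℝ) = (2*(k:ℝ)+3) * ((2*(k:ℝ)+2) * (2*k+1).factorial) := by
      rw [show 2*(k+1)+1 = (2*k+1)+1+1 by ring, Nat.factorial_succ, Nat.factorial_succ]
      push_cast; ring
    have keyk : (((k+1).factorial : ℕ) : ℝ) = ((k:ℝ)+1) * k.factorial := by
      rw [Nat.factorial_succ]; push_cast; ring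
    rw [key, keyk]
    have h1 : ((2*k+1).factorial : ℝ) ≠ 0 := Nat.cast_ne_zero.2 (Nat.factorial_ne_zero _)
    have h2 : (2*((k:ℝ)+1)+1) ≠ 0 := by positivity
    have h3 : (2*(k:ℝ)+3) ≠ 0 := by positivity
    have h4 : (2*(k:ℝ)+2) ≠ 0 := by positivity
    field_simp
    push_cast
    ring


lemma mainlem (F : ℕ → Polynomial ℝ) (hF0 : F 0 = X)
    (hFd : ∀ k, derivative (F (k+1)) = F k)
    (hFi : ∀ k, ∫ x in (-1:ℝ)..1, (F (k+1)).eval x = 0) :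
    ∀ k, ∃ b : ℕ → ℝ,
      F k = ∑ m ∈ Finset.range (k+2), b m • legendre m ∧
      b 0 = 0 ∧
      (∀ m, m % 2 ≠ (k+1) % 2 → b m = 0) ∧
      (∀ m, k+1 < m → b m = 0) ∧
      b (k+1) = ∏ j ∈ Finset.Icc 1 k, (1:ℝ)/(2*j+1) := by
  intro k
  induction k with
  | zero =>
    refine ⟨fun m => if m = 1 then 1 else 0, ?_, by simp, ?_, ?_, by simp⟩
    · rw [hF0, Finset.sum_range_succ, Finset.sum_range_succ]
      simp [legendre_one]
    · intro m hm
      have h1 : m ≠ 1 := by omega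
      show (if m = 1 then (1:ℝ) else 0) = 0
      rw [if_neg h1]
    · intro m hm
      have h1 : m ≠ 1 := by omega
      show (if m = 1 then (1:ℝ) else 0) = 0
      rw [if_neg h1]
  | succ k ih =>
    obtain ⟨b, hsum, hb0, hpar, htop, hlead⟩ := ih
    set b' : ℕ → ℝ := fun m => if m = 0 then 0 else
      b (m-1)/(2*(m:ℝ)-1) - b (m+1)/(2*(m:ℝ)+3) with hb'
    have hb'0 : b' 0 = 0 := by simp [hb']
    have hb'succ : ∀ i : ℕ, b' (i+1) = b i/(2*(i:ℝ)+1) - b (i+2)/(2*(i:ℝ)+5) := by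
      intro i
      simp only [hb', Nat.add_sub_cancel, Nat.add_eq_zero, if_neg (by omega : ¬ (i+1 = 0))]
      push_cast
      ring_nf
    -- the derivative identity
    have key : ∑ m ∈ Finset.range (k+3), b' m • derivative (legendre m) = F k := by
      rw [Finset.sum_range_succ', hb'0, zero_smul, add_zero]
      have step1 : ∑ i ∈ Finset.range (k+2), b' (i+1) • derivative (legendre (i+1))
          = (∑ i ∈ Finset.range (k+2), (b i/(2*(i:ℝ)+1)) • derivative (legendre (i+1)))
            - ∑ i ∈ Finset.range (k+2), (b (i+2)/(2*(i:ℝ)+5)) • derivative (legendre (i+1)) := by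
        rw [← Finset.sum_sub_distrib]
        exact Finset.sum_congr rfl fun i _ => by rw [hb'succ i, sub_smul]
      have step2 : ∑ i ∈ Finset.range (k+2), (b (i+2)/(2*(i:ℝ)+5)) • derivative (legendre (i+1))
          = ∑ i ∈ Finset.range (k+2), (b i/(2*(i:ℝ)+1)) • derivative (legendre (i-1)) := by
        rw [Finset.sum_range_succ, Finset.sum_range_succ,
          htop (k+2) (by omega), htop (k+3) (by omega)]
        simp only [zero_div, zero_smul, add_zero]
        rw [Finset.sum_range_succ', Finset.sum_range_succ']
        norm_num [dLzero]
        exact Finset.sum_congr rfl fun i _ => by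
          rw [show i+1+1 = i+2 by omega]
          congr 1
          ring
      rw [step1, step2, ← Finset.sum_sub_distrib]
      rw [hsum]
      refine Finset.sum_congr rfl fun i _ => ?_
      match i with
      | 0 => simp [hb0]
      | (j+1 : ℕ) =>
        rw [show j+1-1 = j by omega, ← smul_sub]
        have hDL := DL j
        have : derivative (legendre (j+2)) - derivative (legendre j)
            = ((2*((j:ℝ)+1)+1)) • legendre (j+1) := by rw [hDL]; ring_nf
        rw [this, smul_smul]
        congr 1
        have hne : (2*((j:ℝ)+1)+1) ≠ 0 := by positivity
        push_cast
        field_simp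
    -- the expansion of F (k+1)
    have hexp : F (k+1) = ∑ m ∈ Finset.range (k+3), b' m • legendre m := by
      apply uniqpoly
      · rw [hFd k, derivative_sum]
        rw [← key]
        exact Finset.sum_congr rfl fun m _ => (derivative_smul _ _).symm
      · rw [hFi k]
        have hev : ∀ x : ℝ, eval x (∑ m ∈ Finset.range (k+3), b' m • legendre m)
            = ∑ m ∈ Finset.range (k+3), b' m * eval x (legendre m) := by
          intro x; rw [eval_finset_sum]; exact Finset.sum_congr rfl fun m _ => by simp
        rw [intervalIntegral.integral_congr (fun x _ => hev x)]
        rw [intervalIntegral.integral_finset_sum (f := fun m x => b' m * eval x (legendre m)) (fun m _ =>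
          (continuous_const.mul ((legendre m).continuous)).intervalIntegrable (-1:ℝ) 1)]
        symm
        refine Finset.sum_eq_zero fun m _ => ?_
        rw [intervalIntegral.integral_const_mul]
        match m with
        | 0 => rw [hb'0, zero_mul]
        | (j+1 : ℕ) => rw [intL (j+1) (by omega), mul_zero]
    refine ⟨b', hexp, hb'0, ?_, ?_, ?_⟩
    · intro m hm
      match m with
      | 0 => exact hb'0
      | (j+1 : ℕ) =>
        rw [hb'succ j, hpar j (by omega), hpar (j+2) (by omega), zero_div, zero_div, sub_zero]
    · intro m hm
      match m with
      | 0 => exact hb'0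
      | (j+1 : ℕ) =>
        rw [hb'succ j, htop j (by omega), htop (j+2) (by omega), zero_div, zero_div, sub_zero]
    · rw [show k+1+1 = (k+1)+1 by rfl, hb'succ (k+1), htop (k+3) (by omega), zero_div, sub_zero,
        hlead, Finset.prod_Icc_succ_top (by omega : 1 ≤ k+1)]
      push_cast
      ring

theorem stmt10 (F : ℕ → Polynomial ℝ)
    (hF0 : F 0 = Polynomial.X)
    (hFd : ∀ k : ℕ, Polynomial.derivative (F (k + 1)) = F k)
    (hFi : ∀ k : ℕ, ∫ x in (-1 : ℝ)..1, (F (k + 1)).eval x = 0)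
    (k : ℕ) (hk1 : 1 ≤ k) :
    ∃ b : ℕ → ℝ,
      F k = ∑ j ∈ Finset.Icc 1 (k + 1), b j • legendre j ∧
      (∀ j ∈ Finset.Icc 1 (k + 1), j % 2 ≠ (k + 1) % 2 → b j = 0) ∧
      b (k + 1) = ∏ j ∈ Finset.Icc 1 k, (1 : ℝ) / (2 * j + 1) ∧
      b (k + 1) = 2 ^ k * (k.factorial : ℝ) / (2 * k + 1).factorial := by
  obtain ⟨b, hsum, hb0, hpar, htop, hlead⟩ := mainlem F hF0 hFd hFi k
  refine ⟨b, ?_, fun j _ h => hpar j h, hlead, ?_⟩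
  · rw [hsum]
    refine (Finset.sum_subset ?_ ?_).symm
    · intro x hx
      simp only [Finset.mem_Icc] at hx
      simp only [Finset.mem_range]
      omega
    · intro x hx hnx
      simp only [Finset.mem_range] at hx
      simp only [Finset.mem_Icc] at hnx
      have : x = 0 := by omega
      subst this
      rw [hb0, zero_smul]
  · rw [hlead, prodfact]
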